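/- arXiv:2202.12102 — 2 statements merged into one kernel-verified Lean document; each statement's English description precedes it below -/
import Mathlib

section
/- The assignments (D r) ⊗ s ↦ 1 ⊗ D(r·s) − r ⊗ (D s) and r ⊗ (D s) ↦ D(r·s) ⊗ 1 − (D r) ⊗ s induce well-defined k-linear maps γ̃ : (R ⧸ k·1) ⊗[k] R → R ⊗[k] (R ⧸ k·1) and χ̃ : R ⊗[k] (R ⧸ k·1) → (R ⧸ k·1) ⊗[k] R respectively, and these two maps are mutually inverse bijections: χ̃ ∘ γ̃ = id and γ̃ ∘ χ̃ = id. -/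
open TensorProduct

/-! Both maps are obtained by descending a bilinear map on `R × R` along the quotient map
`D : R → R ⧸ k·1`, which is possible because each formula vanishes as soon as the argument to be
fed through `D` is `1`. On generators the composites telescope: for instance
`χ̃ (γ̃ (D r ⊗ s)) = (D (r s) ⊗ 1 - D 1 ⊗ r s) - (D (r s) ⊗ 1 - D r ⊗ s) = D r ⊗ s`,
using `D 1 = 0`. -/

namespace QuotSpanOne

variable (k : Type*) [CommRing k] (R : Type*) [Ring R] [Algebra k R]

local notation "R̄" => R ⧸ Submodule.span k {(1 : R)}

@[simp]
lemma mk_one_eq_zero : (Submodule.Quotient.mk 1 : R̄) = 0 :=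
  (Submodule.Quotient.mk_eq_zero _).2 (Submodule.mem_span_singleton_self _)

noncomputable def gamma : R →ₗ[k] R →ₗ[k] R ⊗[k] R̄ :=
  LinearMap.mk₂ k
    (fun r s => (1 : R) ⊗ₜ Submodule.Quotient.mk (r * s) - r ⊗ₜ Submodule.Quotient.mk s)
    (fun r r' s => by simp only [add_mul, Submodule.Quotient.mk_add, tmul_add, add_tmul]; abel)
    (fun c r s => by simp [smul_tmul', smul_sub])
    (fun r s s' => by simp only [mul_add, Submodule.Quotient.mk_add, tmul_add]; abel)
    (fun c r s => by simp [smul_sub])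

noncomputable def chi : R →ₗ[k] R →ₗ[k] R̄ ⊗[k] R :=
  LinearMap.mk₂ k
    (fun s r => Submodule.Quotient.mk (r * s) ⊗ₜ (1 : R) - Submodule.Quotient.mk r ⊗ₜ s)
    (fun s s' r => by simp only [mul_add, Submodule.Quotient.mk_add, add_tmul, tmul_add]; abel)
    (fun c s r => by simp [smul_tmul', smul_sub])
    (fun s r r' => by simp only [add_mul, Submodule.Quotient.mk_add, add_tmul]; abel)
    (fun c s r => by simp [smul_tmul', smul_sub])

lemma span_one_le_ker_gamma : Submodule.span k {(1 : R)} ≤ LinearMap.ker (gamma k R) :=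
  (Submodule.span_singleton_le_iff_mem _ _).2 <| by
    ext s
    simp [gamma]

lemma span_one_le_ker_chi : Submodule.span k {(1 : R)} ≤ LinearMap.ker (chi k R) :=
  (Submodule.span_singleton_le_iff_mem _ _).2 <| by
    ext r
    simp [chi]

noncomputable def gammaTilde : R̄ ⊗[k] R →ₗ[k] R ⊗[k] R̄ :=
  TensorProduct.lift <| Submodule.liftQ (τ₁₂ := RingHom.id k) (M₂ := R →ₗ[k] R ⊗[k] R̄) _
    (gamma k R) (span_one_le_ker_gamma k R)

noncomputable def chiTilde : R ⊗[k] R̄ →ₗ[k] R̄ ⊗[k] R :=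
  TensorProduct.lift <| LinearMap.flip <|
    Submodule.liftQ (τ₁₂ := RingHom.id k) (M₂ := R →ₗ[k] R̄ ⊗[k] R) _
      (chi k R) (span_one_le_ker_chi k R)

variable {k R}

@[simp]
lemma gammaTilde_mk_tmul (r s : R) :
    gammaTilde k R (Submodule.Quotient.mk r ⊗ₜ s) =
      (1 : R) ⊗ₜ Submodule.Quotient.mk (r * s) - r ⊗ₜ (Submodule.Quotient.mk s : R̄) := by
  simp [gammaTilde, gamma]

@[simp]
lemma chiTilde_tmul_mk (r s : R) :
    chiTilde k R (r ⊗ₜ Submodule.Quotient.mk s) =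
      Submodule.Quotient.mk (r * s) ⊗ₜ (1 : R) - (Submodule.Quotient.mk r : R̄) ⊗ₜ s := by
  simp [chiTilde, chi]

lemma chiTilde_comp_gammaTilde : chiTilde k R ∘ₗ gammaTilde k R = LinearMap.id := by
  refine TensorProduct.ext' fun x s => ?_
  obtain ⟨r, rfl⟩ := Submodule.Quotient.mk_surjective _ x
  simp

lemma gammaTilde_comp_chiTilde : gammaTilde k R ∘ₗ chiTilde k R = LinearMap.id := by
  refine TensorProduct.ext' fun r x => ?_
  obtain ⟨s, rfl⟩ := Submodule.Quotient.mk_surjective _ x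
  simp

end QuotSpanOne

/-- The assignments `(D r) ⊗ s ↦ 1 ⊗ D(r·s) − r ⊗ (D s)` and
`r ⊗ (D s) ↦ D(r·s) ⊗ 1 − (D r) ⊗ s` induce well-defined `k`-linear maps
`γ̃ : (R ⧸ k·1) ⊗[k] R → R ⊗[k] (R ⧸ k·1)` and `χ̃ : R ⊗[k] (R ⧸ k·1) → (R ⧸ k·1) ⊗[k] R`,
and these maps are mutually inverse bijections. -/
theorem stmt_6 (k : Type*) [Field k] (R : Type*) [Ring R] [Algebra k R] :
    ∃ γ : (R ⧸ Submodule.span k {(1 : R)}) ⊗[k] R →ₗ[k]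
            R ⊗[k] (R ⧸ Submodule.span k {(1 : R)}),
    ∃ χ : R ⊗[k] (R ⧸ Submodule.span k {(1 : R)}) →ₗ[k]
            (R ⧸ Submodule.span k {(1 : R)}) ⊗[k] R,
      (∀ r s : R,
        γ ((Submodule.Quotient.mk r : R ⧸ Submodule.span k {(1 : R)}) ⊗ₜ[k] s)
          = (1 : R) ⊗ₜ[k] (Submodule.Quotient.mk (r * s) : R ⧸ Submodule.span k {(1 : R)})
            - r ⊗ₜ[k] (Submodule.Quotient.mk s : R ⧸ Submodule.span k {(1 : R)})) ∧
      (∀ r s : R,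
        χ (r ⊗ₜ[k] (Submodule.Quotient.mk s : R ⧸ Submodule.span k {(1 : R)}))
          = (Submodule.Quotient.mk (r * s) : R ⧸ Submodule.span k {(1 : R)}) ⊗ₜ[k] (1 : R)
            - (Submodule.Quotient.mk r : R ⧸ Submodule.span k {(1 : R)}) ⊗ₜ[k] s) ∧
      χ ∘ₗ γ = LinearMap.id ∧ γ ∘ₗ χ = LinearMap.id :=
  open QuotSpanOne in
  ⟨gammaTilde k R, chiTilde k R, gammaTilde_mk_tmul, chiTilde_tmul_mk,
    chiTilde_comp_gammaTilde, gammaTilde_comp_chiTilde⟩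
end

section
/- Let End₀(R) := {A ∈ End_k(R) : A(1) = 0}. For A ∈ End₀(R) and r ∈ R define r ⊙ A ∈ End_k(R) by (r ⊙ A)(s) := A(s·r) − s·A(r), and for r' ∈ R define A·r' by (A·r')(s) := A(s)·r'. Then: (1) (r ⊙ A)(1) = 0 and (A·r')(1) = 0, so both operations preserve End₀(R); (2) 1 ⊙ A = A and (r·r') ⊙ A = r ⊙ (r' ⊙ A), so ⊙ is a left R-action; (3) r ⊙ (A·r') = (r ⊙ A)·r', so the left and right actions commute. Hence End₀(R) is an (R,R)-bimodule under these operations. -/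
namespace LeftCartanPair

variable {k R : Type*} [CommSemiring k] [Ring R] [Algebra k R]

def smul (r : R) (A : R →ₗ[k] R) : R →ₗ[k] R :=
  A ∘ₗ LinearMap.mulRight k r - LinearMap.mulRight k (A r)

@[simp]
theorem smul_apply (r : R) (A : R →ₗ[k] R) (s : R) : smul r A s = A (s * r) - s * A r := rfl

theorem smul_apply_one (r : R) (A : R →ₗ[k] R) : smul r A 1 = 0 := by
  simp

theorem one_smul {A : R →ₗ[k] R} (hA : A 1 = 0) : smul 1 A = A := by
  ext s
  simp [hA]

theorem mul_smul (r r' : R) (A : R →ₗ[k] R) : smul (r * r') A = smul r (smul r' A) := by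
  ext s
  simp [mul_sub, mul_assoc]

theorem smul_mulRight_comp (r r' : R) (A : R →ₗ[k] R) :
    smul r (LinearMap.mulRight k r' ∘ₗ A) = LinearMap.mulRight k r' ∘ₗ smul r A := by
  ext s
  simp [sub_mul, mul_assoc]

end LeftCartanPair

open LeftCartanPair in
/-- On `End₀(R) = {A ∈ End_k(R) : A 1 = 0}`, the operations
`(r ⊙ A)(s) = A(s·r) − s·A(r)` and `(A·r')(s) = A(s)·r'` preserve `End₀(R)`,
`⊙` is a left `R`-action (`1 ⊙ A = A`, `(r·r') ⊙ A = r ⊙ (r' ⊙ A)`), and the two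
actions commute, making `End₀(R)` an `(R,R)`-bimodule. -/
theorem stmt_16 (k : Type*) [Field k] (R : Type*) [Ring R] [Algebra k R]
    (odot : R → (R →ₗ[k] R) → (R →ₗ[k] R))
    (hodot : ∀ (r : R) (A : R →ₗ[k] R) (s : R), odot r A s = A (s * r) - s * A r)
    (rsm : (R →ₗ[k] R) → R → (R →ₗ[k] R))
    (hrsm : ∀ (A : R →ₗ[k] R) (r' s : R), rsm A r' s = A s * r') :
    (∀ A : R →ₗ[k] R, A 1 = 0 → (∀ r : R, odot r A 1 = 0) ∧ (∀ r' : R, rsm A r' 1 = 0)) ∧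
    (∀ A : R →ₗ[k] R, A 1 = 0 → odot 1 A = A) ∧
    (∀ A : R →ₗ[k] R, A 1 = 0 → ∀ r r' : R, odot (r * r') A = odot r (odot r' A)) ∧
    (∀ A : R →ₗ[k] R, A 1 = 0 → ∀ r r' : R, odot r (rsm A r') = rsm (odot r A) r') := by
  obtain rfl : odot = smul := funext₂ fun r A => LinearMap.ext (hodot r A)
  obtain rfl : rsm = fun A r' => LinearMap.mulRight k r' ∘ₗ A :=
    funext₂ fun A r' => LinearMap.ext (hrsm A r')
  refine ⟨fun A hA => ⟨fun r => smul_apply_one r A, fun r' => ?_⟩,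
    fun A hA => one_smul hA, fun A _ r r' => mul_smul r r' A,
    fun A _ r r' => smul_mulRight_comp r r' A⟩
  simp [hA]
end
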